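/- arXiv:2009.05337 — 3 statements merged into one kernel-verified Lean document; each statement's English description precedes it below -/
import Mathlib

section
/- Let H be a real Hilbert space, V ⊆ H a closed subspace with orthogonal projection P_V, and A : H → H a bounded self-adjoint operator such that A maps V into V and A P_V A P_V = A P_V. Then P := P_V (1 - A) P_V is an orthogonal projection on H. -/
open scoped RealInnerProductSpace

/-! With `p` idempotent and `a` preserving the range of `p`, one has `p a p = a p`, so
`p (1 - a) p = p - a p`; expanding `(p - a p)²` and using `(a p)² = a p` gives back `p - a p`.
Self-adjointness is that of the conjugate `p (1 - a) p` of the self-adjoint `1 - a`. -/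

theorem IsIdempotentElem.mul_one_sub_mul {R : Type*} [Ring R] {p a : R}
    (hp : IsIdempotentElem p) (hpap : p * a * p = a * p) (hap : IsIdempotentElem (a * p)) :
    IsIdempotentElem (p * (1 - a) * p) := by
  have hsub : p * (1 - a) * p = p - a * p := by
    rw [mul_one_sub, sub_mul, hp.eq, hpap]
  have happ : a * p * p = a * p := by rw [mul_assoc, hp.eq]
  have hpap' : p * (a * p) = a * p := by rw [← mul_assoc, hpap]
  rw [hsub, IsIdempotentElem, mul_sub, sub_mul, sub_mul, hp.eq, hpap', happ, hap.eq]
  abel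

theorem IsStarProjection.mul_one_sub_mul {R : Type*} [Ring R] [StarRing R] {p a : R}
    (hp : IsStarProjection p) (ha : IsSelfAdjoint a) (hpap : p * a * p = a * p)
    (hap : IsIdempotentElem (a * p)) :
    IsStarProjection (p * (1 - a) * p) where
  isIdempotentElem := hp.isIdempotentElem.mul_one_sub_mul hpap hap
  isSelfAdjoint := by
    simpa only [hp.isSelfAdjoint.star_eq] using ((IsSelfAdjoint.one R).sub ha).conjugate p

theorem ContinuousLinearMap.mul_mul_eq_mul_of_mapsTo_range {R M : Type*} [Semiring R]
    [AddCommMonoid M] [TopologicalSpace M] [Module R M] {p a : M →L[R] M}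
    (hp : IsIdempotentElem p)
    (ha : ∀ x ∈ LinearMap.range (p : M →ₗ[R] M), a x ∈ LinearMap.range (p : M →ₗ[R] M)) :
    p * a * p = a * p := by
  ext x
  obtain ⟨y, hy⟩ := ha (p x) ⟨x, rfl⟩
  simp only [mul_apply_eq_comp, ← hy]
  exact congr($(hp.eq) y)

theorem stmt4_general {H : Type*} [NormedAddCommGroup H] [InnerProductSpace ℝ H] [CompleteSpace H]
    (V : Submodule ℝ H)
    (PV A : H →L[ℝ] H)
    (hPVsa : ContinuousLinearMap.adjoint PV = PV) (hPVidem : PV.comp PV = PV)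
    (hPVrange : LinearMap.range (PV : H →ₗ[ℝ] H) = V)
    (hAsa : ContinuousLinearMap.adjoint A = A)
    (hAV : ∀ x ∈ V, A x ∈ V)
    (hAPA : (A.comp PV).comp (A.comp PV) = A.comp PV)
    (P : H →L[ℝ] H)
    (hP : P = PV.comp ((ContinuousLinearMap.id ℝ H - A).comp PV)) :
    ContinuousLinearMap.adjoint P = P ∧ P.comp P = P := by
  have hPV : IsStarProjection PV :=
    ⟨hPVidem, by rw [IsSelfAdjoint, ContinuousLinearMap.star_eq_adjoint, hPVsa]⟩
  have hA : IsSelfAdjoint A := by rw [IsSelfAdjoint, ContinuousLinearMap.star_eq_adjoint, hAsa]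
  have hpap : PV * A * PV = A * PV :=
    ContinuousLinearMap.mul_mul_eq_mul_of_mapsTo_range hPVidem (hPVrange ▸ hAV)
  have hP' : P = PV * (1 - A) * PV := hP
  obtain ⟨hidem, hsa⟩ := hP' ▸ hPV.mul_one_sub_mul hA hpap hAPA
  exact ⟨(ContinuousLinearMap.star_eq_adjoint P).symm.trans hsa.star_eq, hidem⟩

/-- If `P_V` is the orthogonal projection onto a closed subspace `V`, `A` is a
bounded self-adjoint operator mapping `V` into `V` with `A P_V A P_V = A P_V`,
then `P = P_V (1 - A) P_V` is an orthogonal projection. -/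
theorem stmt4 {H : Type*} [NormedAddCommGroup H] [InnerProductSpace ℝ H] [CompleteSpace H]
    (V : Submodule ℝ H) (hVclosed : IsClosed (V : Set H))
    (PV A : H →L[ℝ] H)
    (hPVsa : ContinuousLinearMap.adjoint PV = PV) (hPVidem : PV.comp PV = PV)
    (hPVrange : LinearMap.range (PV : H →ₗ[ℝ] H) = V)
    (hAsa : ContinuousLinearMap.adjoint A = A)
    (hAV : ∀ x ∈ V, A x ∈ V)
    (hAPA : (A.comp PV).comp (A.comp PV) = A.comp PV)
    (P : H →L[ℝ] H)
    (hP : P = PV.comp ((ContinuousLinearMap.id ℝ H - A).comp PV)) :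
    ContinuousLinearMap.adjoint P = P ∧ P.comp P = P :=
  stmt4_general V PV A hPVsa hPVidem hPVrange hAsa hAV hAPA P hP
end

section
/- Let Ω ⊂ ℝᵈ (d ≥ 3) be a bounded connected Lipschitz domain with connected boundary. Then the intersection of the null spaces of the inner and outer scalar potentials equals the space of divergence-free tangent fields: N[P_i] ∩ N[P_o] = D(∂Ω), where D(∂Ω) = {f ∈ T(∂Ω) : (∇_T S)* f = 0}. -/
/-!
Subtracting the two boundary equations `B_i f = 0` and `B_o f = 0` leaves `f_η = 0`, and then
either equation reduces to `(∇_T S)* f_T = 0`. Conversely, a tangent field has `f_η = 0` and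
`f = f_T`.
-/

open MeasureTheory Metric Filter Topology
open scoped RealInnerProductSpace ENNReal NNReal

noncomputable section

/-- A bounded connected strongly Lipschitz domain with connected boundary:
near each boundary point, up to a rigid motion, the domain is the subgraph of a
Lipschitz function. -/
structure IsStronglyLipschitzDomain (d : ℕ) (Ω : Set (EuclideanSpace ℝ (Fin d))) : Prop where
  d_pos : 0 < d
  isOpen : IsOpen Ω
  bounded : Bornology.IsBounded Ω
  connected : IsConnected Ω
  boundary_connected : IsConnected (frontier Ω)
  charts : ∀ x ∈ frontier Ω,
    ∃ (U : Set (EuclideanSpace ℝ (Fin d)))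
      (L : EuclideanSpace ℝ (Fin d) ≃ᵢ EuclideanSpace ℝ (Fin d))
      (ψ : (Fin (d - 1) → ℝ) → ℝ) (M : ℝ≥0),
      IsOpen U ∧ x ∈ U ∧ LipschitzWith M ψ ∧
      ∀ p ∈ U, (p ∈ Ω ↔
        (L.symm p) ⟨d - 1, Nat.sub_lt d_pos one_pos⟩ <
          ψ (fun i => (L.symm p) ⟨i.1, lt_of_lt_of_le i.2 (Nat.sub_le d 1)⟩))

/-- The surface measure on the boundary: the `(d-1)`-dimensional Hausdorff
measure restricted to `∂Ω`. -/
def surfaceMeasure (d : ℕ) (Ω : Set (EuclideanSpace ℝ (Fin d))) :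
    Measure (EuclideanSpace ℝ (Fin d)) :=
  (μH[((d : ℝ) - 1)]).restrict (frontier Ω)

/-- The surface area of the unit sphere in `ℝᵈ`. -/
def sphereArea (d : ℕ) : ℝ :=
  ((μH[((d : ℝ) - 1)]) (sphere (0 : EuclideanSpace ℝ (Fin d)) 1)).toReal

theorem half_smul_add_add_eq_zero_and_neg_half_smul_sub_add_eq_zero_iff
    {E F : Type*} [AddCommGroup E] [Module ℝ E] [FunLike F E E] [ZeroHomClass F E E]
    (K : F) (x z : E) :
    ((1 / 2 : ℝ) • x + K x) + z = 0 ∧ -((1 / 2 : ℝ) • x - K x) + z = 0 ↔ x = 0 ∧ z = 0 := by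
  constructor
  · rintro ⟨h_inner, h_outer⟩
    have hx : x = 0 := by
      have h_diff : ((1 / 2 : ℝ) • x + K x + z) - (-((1 / 2 : ℝ) • x - K x) + z) = x := by
        module
      rwa [h_inner, h_outer, sub_zero, eq_comm] at h_diff
    subst hx
    exact ⟨rfl, by simpa using h_inner⟩
  · rintro ⟨rfl, rfl⟩
    simp

theorem inner_smul_add_left_eq_of_inner_eq_zero {E : Type*} [NormedAddCommGroup E]
    [InnerProductSpace ℝ E] {η v : E} (hη : ‖η‖ = 1) (hv : ⟪v, η⟫ = 0) (t : ℝ) :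
    ⟪t • η + v, η⟫ = t := by
  rw [inner_add_left, real_inner_smul_left, hv, real_inner_self_eq_norm_sq, hη]
  ring

section NormalTangentialDecomposition

variable {α E : Type*} [MeasurableSpace α] {μ : Measure α} [NormedAddCommGroup E]
  [InnerProductSpace ℝ E] {p : ℝ≥0∞} {η : α → E} {f fT : Lp E p μ} {fη : Lp ℝ p μ}

theorem Lp.eq_zero_iff_ae_inner_eq_zero_of_ae_eq_smul_add (hη : ∀ᵐ q ∂μ, ‖η q‖ = 1)
    (hdecomp : ∀ᵐ q ∂μ, f q = fη q • η q + fT q ∧ ⟪fT q, η q⟫ = 0) :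
    fη = 0 ↔ ∀ᵐ q ∂μ, ⟪f q, η q⟫ = 0 := by
  have h_normal : ∀ᵐ q ∂μ, ⟪f q, η q⟫ = fη q := by
    filter_upwards [hη, hdecomp] with q hq ⟨hf, hT⟩
    rw [hf]
    exact inner_smul_add_left_eq_of_inner_eq_zero hq hT _
  rw [Lp.eq_zero_iff_ae_eq_zero]
  constructor
  · intro h
    filter_upwards [h_normal, h] with q hq h0
    rw [hq, h0, Pi.zero_apply]
  · intro h
    filter_upwards [h_normal, h] with q hq h0
    rw [← hq, h0, Pi.zero_apply]

theorem Lp.eq_of_ae_eq_smul_add_of_eq_zero (hdecomp : ∀ᵐ q ∂μ, f q = fη q • η q + fT q)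
    (hfη : fη = 0) : f = fT := by
  subst hfη
  refine Lp.ext ?_
  filter_upwards [hdecomp, Lp.coeFn_zero ℝ p μ] with q hq h0
  rw [hq, h0, Pi.zero_apply, zero_smul, zero_add]

end NormalTangentialDecomposition

theorem stmt15_general {d : ℕ} (Ω : Set (EuclideanSpace ℝ (Fin d)))
    -- the outward unit normal field on `∂Ω`
    (η : EuclideanSpace ℝ (Fin d) → EuclideanSpace ℝ (Fin d))
    (hη : ∀ᵐ q ∂(surfaceMeasure d Ω), ‖η q‖ = 1 ∧
      ∀ᶠ t in 𝓝[>] (0 : ℝ), q + t • η q ∈ (closure Ω)ᶜ ∧ q - t • η q ∈ Ω)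
    -- the boundary double layer potential `K`
    (K : Lp ℝ 2 (surfaceMeasure d Ω) →L[ℝ] Lp ℝ 2 (surfaceMeasure d Ω))
    -- `(∇_T S)*`, given by its principal value integral
    (GSstar : Lp (EuclideanSpace ℝ (Fin d)) 2 (surfaceMeasure d Ω) →L[ℝ]
        Lp ℝ 2 (surfaceMeasure d Ω))
    -- a field `f` with normal part `f_η` and tangential part `f_T`
    (f : Lp (EuclideanSpace ℝ (Fin d)) 2 (surfaceMeasure d Ω))
    (fη : Lp ℝ 2 (surfaceMeasure d Ω))
    (fT : Lp (EuclideanSpace ℝ (Fin d)) 2 (surfaceMeasure d Ω))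
    (hdecomp : ∀ᵐ q ∂(surfaceMeasure d Ω),
      f q = fη q • η q + fT q ∧ ⟪fT q, η q⟫ = 0) :
    -- `f ∈ N[P_i] ∩ N[P_o]`  ↔  `f ∈ D(∂Ω)`
    ((((1 / 2 : ℝ) • fη + K fη) + GSstar fT = 0 ∧
        -((1 / 2 : ℝ) • fη - K fη) + GSstar fT = 0) ↔
      ((∀ᵐ q ∂(surfaceMeasure d Ω), ⟪f q, η q⟫ = 0) ∧ GSstar f = 0)) := by
  rw [half_smul_add_add_eq_zero_and_neg_half_smul_sub_add_eq_zero_iff,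
    ← Lp.eq_zero_iff_ae_inner_eq_zero_of_ae_eq_smul_add (hη.mono fun _ h => h.1) hdecomp]
  refine and_congr_right fun hfη => ?_
  rw [Lp.eq_of_ae_eq_smul_add_of_eq_zero (hdecomp.mono fun _ h => h.1) hfη]

/-- Lemma 4.2: the intersection of the null spaces of the inner and outer
scalar potentials (equivalently, of the boundary operators `B_i` and `B_o`)
equals the space `D(∂Ω)` of divergence-free tangent fields, i.e. `f` is killed
by both boundary operators iff `f` is tangent and `(∇_T S)* f = 0`. -/
theorem stmt15 {d : ℕ} (hd : 3 ≤ d) (Ω : Set (EuclideanSpace ℝ (Fin d)))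
    (hΩ : IsStronglyLipschitzDomain d Ω)
    -- the outward unit normal field on `∂Ω`
    (η : EuclideanSpace ℝ (Fin d) → EuclideanSpace ℝ (Fin d))
    (hη : ∀ᵐ q ∂(surfaceMeasure d Ω), ‖η q‖ = 1 ∧
      ∀ᶠ t in 𝓝[>] (0 : ℝ), q + t • η q ∈ (closure Ω)ᶜ ∧ q - t • η q ∈ Ω)
    -- the boundary double layer potential `K`
    (K : Lp ℝ 2 (surfaceMeasure d Ω) →L[ℝ] Lp ℝ 2 (surfaceMeasure d Ω))
    (hK : ∀ f : Lp ℝ 2 (surfaceMeasure d Ω), ∀ᵐ p ∂(surfaceMeasure d Ω),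
      Tendsto (fun ε : ℝ => (1 / sphereArea d) *
          ∫ q in {q | ε ≤ dist q p}, (⟪q - p, η q⟫ / dist q p ^ d) * f q
            ∂(surfaceMeasure d Ω))
        (𝓝[>] 0) (𝓝 (K f p)))
    -- `(∇_T S)*`, given by its principal value integral
    (GSstar : Lp (EuclideanSpace ℝ (Fin d)) 2 (surfaceMeasure d Ω) →L[ℝ]
        Lp ℝ 2 (surfaceMeasure d Ω))
    (hGSstar : ∀ τ : Lp (EuclideanSpace ℝ (Fin d)) 2 (surfaceMeasure d Ω),
      ∀ᵐ p ∂(surfaceMeasure d Ω),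
      Tendsto (fun ε : ℝ => (1 / sphereArea d) *
          ∫ q in {q | ε ≤ dist q p}, ⟪q - p, τ q⟫ / dist p q ^ d ∂(surfaceMeasure d Ω))
        (𝓝[>] 0) (𝓝 (GSstar τ p)))
    -- a field `f` with normal part `f_η` and tangential part `f_T`
    (f : Lp (EuclideanSpace ℝ (Fin d)) 2 (surfaceMeasure d Ω))
    (fη : Lp ℝ 2 (surfaceMeasure d Ω))
    (fT : Lp (EuclideanSpace ℝ (Fin d)) 2 (surfaceMeasure d Ω))
    (hdecomp : ∀ᵐ q ∂(surfaceMeasure d Ω),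
      f q = fη q • η q + fT q ∧ ⟪fT q, η q⟫ = 0) :
    -- `f ∈ N[P_i] ∩ N[P_o]`  ↔  `f ∈ D(∂Ω)`
    ((((1 / 2 : ℝ) • fη + K fη) + GSstar fT = 0 ∧
        -((1 / 2 : ℝ) • fη - K fη) + GSstar fT = 0) ↔
      ((∀ᵐ q ∂(surfaceMeasure d Ω), ⟪f q, η q⟫ = 0) ∧ GSstar f = 0)) :=
  stmt15_general Ω η hη K GSstar f fη fT hdecomp

end
end

section
/- Let Ω ⊂ ℝᵈ (d ≥ 3) be a bounded connected Lipschitz domain with connected boundary, and suppose the boundary Hardy spaces H₊(∂Ω) = range(B_o*) and H₋(∂Ω) = range(B_i*) are orthogonal in L²(∂Ω; ℝᵈ). Then the double layer potential operator K on L²(∂Ω) is self-adjoint, i.e. K = K*. -/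
open MeasureTheory Metric Filter Topology
open scoped RealInnerProductSpace ENNReal NNReal

noncomputable section

/- Write `N g := g η` for multiplication by the unit normal and `T := ∇_T S`, the adjoint of
`GSstar = (∇_T S)*`. Then
`B_o* = -N (1/2 - K*) + T` and `B_i* = B_o* + N`, with `N* N = 1` because `|η| = 1` and
`N* T = K*` because `(∇_T S)* (g η)` and `K g` are the same principal value integral. Hence
`N* B_o* = 2K* - 1/2`, and orthogonality `B_o B_i* = 0 = B_i B_o*` gives
`0 = B_o B_i* - B_i B_o* = B_o N - N* B_o* = 2(K - K*)`. -/

section Hilbert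

variable {H E : Type*} [NormedAddCommGroup H] [InnerProductSpace ℝ H] [CompleteSpace H]
  [NormedAddCommGroup E] [InnerProductSpace ℝ E]

theorem adjoint_eq_self_of_orthogonal_ranges (K : H →L[ℝ] H) (Bo N T : H → E)
    (hN : ∀ f g, ⟪N f, N g⟫ = ⟪f, g⟫) (hNT : ∀ f g, ⟪N f, T g⟫ = ⟪K f, g⟫)
    (hBo : ∀ g, Bo g = -N ((1 / 2 : ℝ) • g - ContinuousLinearMap.adjoint K g) + T g)
    (horth : ∀ φ χ, ⟪Bo φ, Bo χ + N χ⟫ = 0) :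
    ContinuousLinearMap.adjoint K = K := by
  have hBoN : ∀ φ χ, ⟪Bo φ, N χ⟫ = -(1 / 2) * ⟪φ, χ⟫ + 2 * ⟪φ, K χ⟫ := by
    intro φ χ
    rw [hBo, inner_add_left, inner_neg_left, hN, real_inner_comm (N χ), hNT, inner_sub_left,
      real_inner_smul_left, ContinuousLinearMap.adjoint_inner_left, real_inner_comm φ (K χ)]
    ring
  have hsymm : ∀ φ χ, ⟪Bo φ, N χ⟫ = ⟪Bo χ, N φ⟫ := by
    intro φ χ
    have h₁ := horth φ χ
    have h₂ := horth χ φ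
    rw [inner_add_right] at h₁ h₂
    linarith [real_inner_comm (Bo φ) (Bo χ)]
  refine ContinuousLinearMap.ext fun χ => ext_inner_right ℝ fun φ => ?_
  have h := hsymm φ χ
  rw [hBoN, hBoN, real_inner_comm χ φ] at h
  rw [ContinuousLinearMap.adjoint_inner_left]
  linarith [real_inner_comm φ (K χ)]

end Hilbert

section L2

variable {α E : Type*} [MeasurableSpace α] {μ : Measure α}
  [NormedAddCommGroup E] [InnerProductSpace ℝ E]

theorem Lp.sub_ae_eq_smul_of_ae_eq {Bi Bo t : Lp E 2 μ} {g a : Lp ℝ 2 μ} {η : α → E}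
    (hBi : Bi =ᵐ[μ] fun q => (((1 / 2 : ℝ) • g + a) q) • η q + t q)
    (hBo : Bo =ᵐ[μ] fun q => (-(((1 / 2 : ℝ) • g - a) q)) • η q + t q) :
    (Bi - Bo : Lp E 2 μ) =ᵐ[μ] fun q => g q • η q := by
  filter_upwards [Lp.coeFn_sub Bi Bo, hBi, hBo, Lp.coeFn_add ((1 / 2 : ℝ) • g) a,
    Lp.coeFn_sub ((1 / 2 : ℝ) • g) a, Lp.coeFn_smul (1 / 2 : ℝ) g] with q h₁ h₂ h₃ h₄ h₅ h₆
  rw [h₁, Pi.sub_apply, h₂, h₃, h₄, h₅, Pi.add_apply, Pi.sub_apply, h₆, Pi.smul_apply,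
    smul_eq_mul]
  module

theorem Lp.eq_neg_add_of_ae_eq_smul {Bo t v : Lp E 2 μ} {a : Lp ℝ 2 μ} {η : α → E}
    (hBo : Bo =ᵐ[μ] fun q => (-(a q)) • η q + t q) (hv : v =ᵐ[μ] fun q => a q • η q) :
    Bo = -v + t := by
  refine Lp.ext ?_
  filter_upwards [hBo, hv, Lp.coeFn_add (-v) t, Lp.coeFn_neg v] with q hBo hv h₁ h₂
  rw [hBo, h₁, Pi.add_apply, h₂, Pi.neg_apply, hv, neg_smul]

theorem Lp.inner_eq_of_ae_eq_smul_unit {u v : Lp E 2 μ} {f g : Lp ℝ 2 μ} {η : α → E}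
    (hη : ∀ᵐ q ∂μ, ‖η q‖ = 1) (hu : u =ᵐ[μ] fun q => f q • η q)
    (hv : v =ᵐ[μ] fun q => g q • η q) : ⟪u, v⟫ = ⟪f, g⟫ := by
  rw [L2.inner_def, L2.inner_def]
  refine integral_congr_ae ?_
  filter_upwards [hu, hv, hη] with q hu hv hη
  rw [hu, hv, real_inner_smul_left, real_inner_smul_right, real_inner_self_eq_norm_sq, hη,
    real_inner_eq_re_inner, RCLike.inner_apply, conj_trivial, RCLike.re_to_real]
  ring

end L2

theorem Lp.eq_of_tendsto_principalValue {F : Type*} [NormedAddCommGroup F]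
    [InnerProductSpace ℝ F] [MeasurableSpace F] {μ : Measure F} {n : ℕ} {c : ℝ} {η : F → F}
    {f k h : Lp ℝ 2 μ} {u : Lp F 2 μ} (hu : u =ᵐ[μ] fun q => f q • η q)
    (hk : ∀ᵐ p ∂μ, Tendsto (fun ε : ℝ => c *
        ∫ q in {q | ε ≤ dist q p}, (⟪q - p, η q⟫ / dist q p ^ n) * f q ∂μ) (𝓝[>] 0) (𝓝 (k p)))
    (hh : ∀ᵐ p ∂μ, Tendsto (fun ε : ℝ => c *
        ∫ q in {q | ε ≤ dist q p}, ⟪q - p, u q⟫ / dist p q ^ n ∂μ) (𝓝[>] 0) (𝓝 (h p))) :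
    h = k := by
  refine Lp.ext ?_
  filter_upwards [hh, hk] with p hh hk
  refine tendsto_nhds_unique ?_ hk
  refine hh.congr fun ε => congrArg (c * ·) (integral_congr_ae (ae_restrict_of_ae ?_))
  filter_upwards [hu] with q hq
  rw [hq, real_inner_smul_right, dist_comm p q]
  ring

theorem stmt16_general {d : ℕ} (Ω : Set (EuclideanSpace ℝ (Fin d)))
    -- the outward unit normal field on `∂Ω`
    (η : EuclideanSpace ℝ (Fin d) → EuclideanSpace ℝ (Fin d))
    (hη : ∀ᵐ q ∂(surfaceMeasure d Ω), ‖η q‖ = 1 ∧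
      ∀ᶠ t in 𝓝[>] (0 : ℝ), q + t • η q ∈ (closure Ω)ᶜ ∧ q - t • η q ∈ Ω)
    -- the boundary double layer potential `K`
    (K : Lp ℝ 2 (surfaceMeasure d Ω) →L[ℝ] Lp ℝ 2 (surfaceMeasure d Ω))
    (hK : ∀ f : Lp ℝ 2 (surfaceMeasure d Ω), ∀ᵐ p ∂(surfaceMeasure d Ω),
      Tendsto (fun ε : ℝ => (1 / sphereArea d) *
          ∫ q in {q | ε ≤ dist q p}, (⟪q - p, η q⟫ / dist q p ^ d) * f q
            ∂(surfaceMeasure d Ω))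
        (𝓝[>] 0) (𝓝 (K f p)))
    -- `(∇_T S)*`, given by its principal value integral
    (GSstar : Lp (EuclideanSpace ℝ (Fin d)) 2 (surfaceMeasure d Ω) →L[ℝ]
        Lp ℝ 2 (surfaceMeasure d Ω))
    (hGSstar : ∀ τ : Lp (EuclideanSpace ℝ (Fin d)) 2 (surfaceMeasure d Ω),
      ∀ᵐ p ∂(surfaceMeasure d Ω),
      Tendsto (fun ε : ℝ => (1 / sphereArea d) *
          ∫ q in {q | ε ≤ dist q p}, ⟪q - p, τ q⟫ / dist p q ^ d ∂(surfaceMeasure d Ω))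
        (𝓝[>] 0) (𝓝 (GSstar τ p)))
    -- the adjoint boundary operators `B_i*` and `B_o*`
    (Bis Bos : Lp ℝ 2 (surfaceMeasure d Ω) →L[ℝ]
        Lp (EuclideanSpace ℝ (Fin d)) 2 (surfaceMeasure d Ω))
    (hBis : ∀ g : Lp ℝ 2 (surfaceMeasure d Ω),
      (Bis g : EuclideanSpace ℝ (Fin d) → EuclideanSpace ℝ (Fin d))
        =ᵐ[surfaceMeasure d Ω] fun q =>
          (((1 / 2 : ℝ) • g + ContinuousLinearMap.adjoint K g) q) • η q +
            (ContinuousLinearMap.adjoint GSstar g) q)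
    (hBos : ∀ g : Lp ℝ 2 (surfaceMeasure d Ω),
      (Bos g : EuclideanSpace ℝ (Fin d) → EuclideanSpace ℝ (Fin d))
        =ᵐ[surfaceMeasure d Ω] fun q =>
          (-(((1 / 2 : ℝ) • g - ContinuousLinearMap.adjoint K g) q)) • η q +
            (ContinuousLinearMap.adjoint GSstar g) q)
    -- the Hardy spaces `H₊ = range B_o*` and `H₋ = range B_i*` are orthogonal
    (horth : ∀ φ χ : Lp ℝ 2 (surfaceMeasure d Ω), ⟪Bos φ, Bis χ⟫ = 0) :
    ContinuousLinearMap.adjoint K = K := by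
  set N := Bis - Bos
  have hN : ∀ g, (N g : EuclideanSpace ℝ (Fin d) → EuclideanSpace ℝ (Fin d))
      =ᵐ[surfaceMeasure d Ω] fun q => g q • η q :=
    fun g => Lp.sub_ae_eq_smul_of_ae_eq (hBis g) (hBos g)
  refine adjoint_eq_self_of_orthogonal_ranges K Bos N (ContinuousLinearMap.adjoint GSstar)
    (fun f g => Lp.inner_eq_of_ae_eq_smul_unit (hη.mono fun _ h => h.1) (hN f) (hN g))
    (fun f g => ?_) (fun g => ?_) (fun φ χ => by simpa [N] using horth φ χ)
  · rw [ContinuousLinearMap.adjoint_inner_right,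
      Lp.eq_of_tendsto_principalValue (hN f) (hK f) (hGSstar (N f))]
  · exact Lp.eq_neg_add_of_ae_eq_smul (hBos g) (hN _)

/-- If the boundary Hardy spaces `H₊(∂Ω) = range B_o*` and
`H₋(∂Ω) = range B_i*` are orthogonal in `L²(∂Ω; ℝᵈ)`, then the double layer
potential `K` is self-adjoint. Here
`B_i* g = η (1/2 + K*) g + ∇_T S g` and `B_o* g = −η (1/2 − K*) g + ∇_T S g`,
with `∇_T S` realized as the adjoint of `(∇_T S)*`. -/
theorem stmt16 {d : ℕ} (hd : 3 ≤ d) (Ω : Set (EuclideanSpace ℝ (Fin d)))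
    (hΩ : IsStronglyLipschitzDomain d Ω)
    -- the outward unit normal field on `∂Ω`
    (η : EuclideanSpace ℝ (Fin d) → EuclideanSpace ℝ (Fin d))
    (hη : ∀ᵐ q ∂(surfaceMeasure d Ω), ‖η q‖ = 1 ∧
      ∀ᶠ t in 𝓝[>] (0 : ℝ), q + t • η q ∈ (closure Ω)ᶜ ∧ q - t • η q ∈ Ω)
    -- the boundary double layer potential `K`
    (K : Lp ℝ 2 (surfaceMeasure d Ω) →L[ℝ] Lp ℝ 2 (surfaceMeasure d Ω))
    (hK : ∀ f : Lp ℝ 2 (surfaceMeasure d Ω), ∀ᵐ p ∂(surfaceMeasure d Ω),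
      Tendsto (fun ε : ℝ => (1 / sphereArea d) *
          ∫ q in {q | ε ≤ dist q p}, (⟪q - p, η q⟫ / dist q p ^ d) * f q
            ∂(surfaceMeasure d Ω))
        (𝓝[>] 0) (𝓝 (K f p)))
    -- `(∇_T S)*`, given by its principal value integral
    (GSstar : Lp (EuclideanSpace ℝ (Fin d)) 2 (surfaceMeasure d Ω) →L[ℝ]
        Lp ℝ 2 (surfaceMeasure d Ω))
    (hGSstar : ∀ τ : Lp (EuclideanSpace ℝ (Fin d)) 2 (surfaceMeasure d Ω),
      ∀ᵐ p ∂(surfaceMeasure d Ω),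
      Tendsto (fun ε : ℝ => (1 / sphereArea d) *
          ∫ q in {q | ε ≤ dist q p}, ⟪q - p, τ q⟫ / dist p q ^ d ∂(surfaceMeasure d Ω))
        (𝓝[>] 0) (𝓝 (GSstar τ p)))
    -- the adjoint boundary operators `B_i*` and `B_o*`
    (Bis Bos : Lp ℝ 2 (surfaceMeasure d Ω) →L[ℝ]
        Lp (EuclideanSpace ℝ (Fin d)) 2 (surfaceMeasure d Ω))
    (hBis : ∀ g : Lp ℝ 2 (surfaceMeasure d Ω),
      (Bis g : EuclideanSpace ℝ (Fin d) → EuclideanSpace ℝ (Fin d))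
        =ᵐ[surfaceMeasure d Ω] fun q =>
          (((1 / 2 : ℝ) • g + ContinuousLinearMap.adjoint K g) q) • η q +
            (ContinuousLinearMap.adjoint GSstar g) q)
    (hBos : ∀ g : Lp ℝ 2 (surfaceMeasure d Ω),
      (Bos g : EuclideanSpace ℝ (Fin d) → EuclideanSpace ℝ (Fin d))
        =ᵐ[surfaceMeasure d Ω] fun q =>
          (-(((1 / 2 : ℝ) • g - ContinuousLinearMap.adjoint K g) q)) • η q +
            (ContinuousLinearMap.adjoint GSstar g) q)
    -- the Hardy spaces `H₊ = range B_o*` and `H₋ = range B_i*` are orthogonal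
    (horth : ∀ φ χ : Lp ℝ 2 (surfaceMeasure d Ω), ⟪Bos φ, Bis χ⟫ = 0) :
    ContinuousLinearMap.adjoint K = K :=
  stmt16_general Ω η hη K hK GSstar hGSstar Bis Bos hBis hBos horth

end
end
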